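/- arXiv:1110.4900 — 2 statements merged into one kernel-verified Lean document; each statement's English description precedes it below -/
import Mathlib

section
/- Let G be a finite simple graph, let L be a list-assignment for G with |L(v)| = 3 for every vertex v, and let v_1, …, v_k be distinct vertices of G. For i = 0, …, k let G_i denote the induced subgraph G − {v_{i+1}, …, v_k} (so G_k = G and G_0 = G − {v_1, …, v_k}). If for every i = 1, …, k the degree of v_i in G_i is at most 5, and moreover there exists an index i with the degree of v_i in G_i at most 3, then every arboreal L-coloring of G_0 can be extended to an arboreal L-coloring of G in at least two distinct ways. -/
/-- `ArbColOn G s f` : the coloring `f` is arboreal on the vertex set `s`,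
i.e. for every color `c`, the subgraph of `G` induced on the vertices of `s`
colored `c` is acyclic (a forest). -/
def ArbColOn {V : Type*} {α : Type*} (G : SimpleGraph V) (s : Set V) (f : V → α) : Prop :=
  ∀ c : α, (G.induce {v | v ∈ s ∧ f v = c}).IsAcyclic

/-!
Colour `v 1, …, v k` greedily in this order. A vertex with at most one neighbour in a colour
class can join that class without creating a cycle, since a cycle through it would pass through
two of its neighbours in the class. When `v i` is coloured, its at most five neighbours in `G_i`
fill at most two of the three colours of `L (v i)` twice, so some colour is admissible; if it has
at most three neighbours, at most one colour is filled twice, so `v i` has two admissible colours,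
and extending both choices gives two different colourings.
-/

namespace SimpleGraph

variable {V : Type*} {G : SimpleGraph V}

theorem isAcyclic_induce_iff {s : Set V} :
    (G.induce s).IsAcyclic ↔
      ∀ (a : V) (w : G.Walk a a), w.IsCycle → ¬∀ x ∈ w.support, x ∈ s := by
  have hι : Function.Injective (Embedding.induce (G := G) s).toHom :=
    (Embedding.induce (G := G) s).injective
  constructor
  · intro h a w hw hws
    refine h (w.induce s hws) ?_
    rwa [← Walk.isCycle_map_iff_of_injective hι, Walk.map_induce]
  · intro h a w hw
    refine h _ _ (hw.map hι) ?_
    simp only [Walk.support_map, List.mem_map]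
    rintro _ ⟨x, -, rfl⟩
    exact x.2

theorem IsAcyclic.induce_insert {s : Set V} {v : V} (hs : (G.induce s).IsAcyclic)
    (hv : {u ∈ s | G.Adj v u}.Subsingleton) : (G.induce (insert v s)).IsAcyclic := by
  classical
  rw [isAcyclic_induce_iff] at hs ⊢
  intro a w hw hws
  by_cases hvw : v ∈ w.support
  · set c := w.rotate v hvw
    have hc : c.IsCycle := hw.rotate hvw
    have hcs : ∀ x ∈ c.support, x ∈ insert v s := fun x hx =>
      hws x ((w.mem_support_rotate_iff v hvw).mp hx)
    have mem_of_adj : ∀ x ∈ c.support, G.Adj v x → x ∈ {u ∈ s | G.Adj v u} :=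
      fun x hx hadj => ⟨(hcs x hx).resolve_left hadj.ne', hadj⟩
    exact hc.snd_ne_penultimate <| hv
      (mem_of_adj _ (c.getVert_mem_support 1) (c.adj_snd hc.not_nil))
      (mem_of_adj _ (c.getVert_mem_support _) (c.adj_penultimate hc.not_nil).symm)
  · exact hs a w hw fun x hx => (hws x hx).resolve_left fun h => hvw (h ▸ hx)

end SimpleGraph

open Function

section ArborealColoring

variable {V α : Type*}

theorem ArbColOn.update_insert [DecidableEq V] {G : SimpleGraph V} {s : Set V} {f : V → α}
    {v : V} {c : α} (hf : ArbColOn G s f) (hv : v ∉ s)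
    (hc : {u ∈ s | G.Adj v u ∧ f u = c}.Subsingleton) :
    ArbColOn G (insert v s) (update f v c) := by
  intro d
  by_cases hdc : d = c
  · subst d
    have hclass :
        {x | x ∈ insert v s ∧ update f v c x = c} = insert v {x | x ∈ s ∧ f x = c} := by
      ext x
      by_cases hx : x = v <;> simp [hx]
    rw [hclass]
    exact (hf c).induce_insert (hc.anti fun u hu => ⟨hu.1.1, hu.2, hu.1.2⟩)
  · have hclass : {x | x ∈ insert v s ∧ update f v c x = d} = {x | x ∈ s ∧ f x = d} := by
      ext x
      by_cases hx : x = v <;> simp [hx, hv, Ne.symm hdc]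
    rw [hclass]
    exact hf d

theorem Set.exists_mem_fiber_subsingleton [Finite V] (N : Set V) (f : V → α) {L : Finset α}
    (h : N.ncard < 2 * L.card) : ∃ c ∈ L, {u ∈ N | f u = c}.Subsingleton := by
  classical
  have hN := N.toFinite
  rw [Set.ncard_eq_toFinset_card N hN, mul_comm] at h
  obtain ⟨c, hcL, hc⟩ := Finset.exists_card_fiber_lt_of_card_lt_mul (f := f) h
  refine ⟨c, hcL, ?_⟩
  rw [← Set.ncard_le_one_iff_subsingleton, ← Nat.lt_succ_iff]
  convert hc
  rw [← Set.ncard_coe_finset, Finset.coe_filter]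
  simp

theorem Set.exists_two_mem_fiber_subsingleton [Finite V] (N : Set V) (f : V → α) {L : Finset α}
    (h : N.ncard + 2 < 2 * L.card) :
    ∃ c₁ ∈ L, ∃ c₂ ∈ L, c₁ ≠ c₂ ∧
      {u ∈ N | f u = c₁}.Subsingleton ∧ {u ∈ N | f u = c₂}.Subsingleton := by
  classical
  obtain ⟨c₁, h₁, hc₁⟩ := N.exists_mem_fiber_subsingleton f (L := L) (by omega)
  obtain ⟨c₂, h₂, hc₂⟩ := N.exists_mem_fiber_subsingleton f (L := L.erase c₁)
    (by rw [Finset.card_erase_of_mem h₁]; omega)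
  exact ⟨c₁, h₁, c₂, Finset.mem_of_mem_erase h₂, (Finset.ne_of_mem_erase h₂).symm,
    hc₁, hc₂⟩

variable (G : SimpleGraph V) (L : V → Finset α) {k : ℕ}

def backNeighborSet (v : Fin k → V) (i : Fin k) : Set V :=
  {u | (∀ j : Fin k, (i : ℕ) < (j : ℕ) → u ≠ v j) ∧ G.Adj (v i) u}

def IsArbLColoringOn (s : Set V) (f : V → α) : Prop :=
  (∀ x ∈ s, f x ∈ L x) ∧ ArbColOn G s f

def IsArbExtension (v : Fin k → V) (f g : V → α) : Prop :=
  (∀ x, g x ∈ L x) ∧ ArbColOn G Set.univ g ∧ ∀ x, (∀ j : Fin k, x ≠ v j) → g x = f x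

variable {G L}

theorem backNeighborSet_comp_succ (v : Fin (k + 1) → V) (i : Fin k) :
    backNeighborSet G (v ∘ Fin.succ) i = backNeighborSet G v i.succ := by
  ext u
  simp [backNeighborSet, Fin.forall_fin_succ]

theorem setOf_forall_ne_comp_succ {v : Fin (k + 1) → V} (hv : Injective v) :
    {x | ∀ j : Fin k, x ≠ v j.succ} = insert (v 0) {x | ∀ j, x ≠ v j} := by
  ext x
  by_cases hx : x = v 0
  · simp [hx, hv.ne (Fin.succ_ne_zero _).symm]
  · simp [hx, Fin.forall_fin_succ]

theorem IsArbLColoringOn.update_head [DecidableEq V] {v : Fin (k + 1) → V}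
    (hv : Injective v) {f : V → α} (hf : IsArbLColoringOn G L {x | ∀ j, x ≠ v j} f)
    {c : α} (hcL : c ∈ L (v 0)) (hc : {u ∈ backNeighborSet G v 0 | f u = c}.Subsingleton) :
    IsArbLColoringOn G L {x | ∀ j : Fin k, x ≠ v j.succ} (update f (v 0) c) := by
  rw [IsArbLColoringOn, setOf_forall_ne_comp_succ hv]
  refine ⟨?_, hf.2.update_insert (fun h => h 0 rfl) (hc.anti ?_)⟩
  · rintro x (rfl | hx)
    · simpa using hcL
    · rw [update_of_ne (hx 0)]
      exact hf.1 x hx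
  · rintro u ⟨hu, hadj, rfl⟩
    exact ⟨⟨fun j _ => hu j, hadj⟩, rfl⟩

theorem IsArbExtension.of_update_head [DecidableEq V] {v : Fin (k + 1) → V} {f g : V → α}
    {c : α} (hg : IsArbExtension G L (v ∘ Fin.succ) (update f (v 0) c) g) :
    IsArbExtension G L v f g := by
  refine ⟨hg.1, hg.2.1, fun x hx => ?_⟩
  rw [hg.2.2 x fun j => hx j.succ, update_of_ne (hx 0)]

theorem IsArbExtension.apply_head [DecidableEq V] {v : Fin (k + 1) → V} (hv : Injective v)
    {f g : V → α} {c : α} (hg : IsArbExtension G L (v ∘ Fin.succ) (update f (v 0) c) g) :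
    g (v 0) = c := by
  rw [hg.2.2 _ fun j => hv.ne (Fin.succ_ne_zero j).symm, update_self]

variable [Finite V]

theorem exists_isArbExtension (v : Fin k → V) (hv : Injective v)
    (hdeg : ∀ i, (backNeighborSet G v i).ncard < 2 * (L (v i)).card)
    (f : V → α) (hf : IsArbLColoringOn G L {x | ∀ j, x ≠ v j} f) :
    ∃ g, IsArbExtension G L v f g := by
  classical
  induction k generalizing f with
  | zero =>
    have huniv : {x : V | ∀ j : Fin 0, x ≠ v j} = Set.univ :=
      Set.eq_univ_of_forall fun _ j => j.elim0
    rw [huniv] at hf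
    exact ⟨f, fun x => hf.1 x trivial, hf.2, fun _ _ => rfl⟩
  | succ k ih =>
    obtain ⟨c, hcL, hc⟩ := (backNeighborSet G v 0).exists_mem_fiber_subsingleton f (hdeg 0)
    obtain ⟨g, hg⟩ := ih (v ∘ Fin.succ) (hv.comp (Fin.succ_injective k))
      (fun i => backNeighborSet_comp_succ v i ▸ hdeg i.succ) _ (hf.update_head hv hcL hc)
    exact ⟨g, hg.of_update_head⟩

theorem exists_two_isArbExtension (v : Fin k → V) (hv : Injective v)
    (hdeg : ∀ i, (backNeighborSet G v i).ncard < 2 * (L (v i)).card)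
    (hdeg' : ∃ i, (backNeighborSet G v i).ncard + 2 < 2 * (L (v i)).card)
    (f : V → α) (hf : IsArbLColoringOn G L {x | ∀ j, x ≠ v j} f) :
    ∃ g₁ g₂, IsArbExtension G L v f g₁ ∧ IsArbExtension G L v f g₂ ∧
      g₁ ≠ g₂ := by
  classical
  induction k generalizing f with
  | zero => exact hdeg'.elim fun i _ => i.elim0
  | succ k ih =>
    have hv' := hv.comp (Fin.succ_injective k)
    have hdeg_succ :
        ∀ i, (backNeighborSet G (v ∘ Fin.succ) i).ncard < 2 * (L (v i.succ)).card :=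
      fun i => backNeighborSet_comp_succ v i ▸ hdeg i.succ
    obtain ⟨i, hi⟩ := hdeg'
    rcases Fin.eq_zero_or_eq_succ i with rfl | ⟨i, rfl⟩
    · obtain ⟨c₁, hc₁L, c₂, hc₂L, hne, hc₁, hc₂⟩ :=
        (backNeighborSet G v 0).exists_two_mem_fiber_subsingleton f hi
      obtain ⟨g₁, hg₁⟩ :=
        exists_isArbExtension _ hv' hdeg_succ _ (hf.update_head hv hc₁L hc₁)
      obtain ⟨g₂, hg₂⟩ :=
        exists_isArbExtension _ hv' hdeg_succ _ (hf.update_head hv hc₂L hc₂)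
      refine ⟨g₁, g₂, hg₁.of_update_head, hg₂.of_update_head, fun h => hne ?_⟩
      rw [← hg₁.apply_head hv, h, hg₂.apply_head hv]
    · obtain ⟨c, hcL, hc⟩ := (backNeighborSet G v 0).exists_mem_fiber_subsingleton f (hdeg 0)
      obtain ⟨g₁, g₂, hg₁, hg₂, hne⟩ := ih _ hv' hdeg_succ
        ⟨i, backNeighborSet_comp_succ v i ▸ hi⟩ _ (hf.update_head hv hcL hc)
      exact ⟨g₁, g₂, hg₁.of_update_head, hg₂.of_update_head, hne⟩

end ArborealColoring

theorem stmt_1 {V α : Type*} [Fintype V] (G : SimpleGraph V)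
    (L : V → Finset α) (hL : ∀ x, (L x).card = 3)
    (k : ℕ) (v : Fin k → V) (hv : Function.Injective v)
    -- for every i, the degree of `v i` in `G_i = G − {v j : j > i}` is at most 5
    (hdeg : ∀ i : Fin k,
      {u | (∀ j : Fin k, (i : ℕ) < (j : ℕ) → u ≠ v j) ∧ G.Adj (v i) u}.ncard ≤ 5)
    -- there is an index i whose degree in `G_i` is at most 3
    (hdeg3 : ∃ i : Fin k,
      {u | (∀ j : Fin k, (i : ℕ) < (j : ℕ) → u ≠ v j) ∧ G.Adj (v i) u}.ncard ≤ 3)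
    (f : V → α)
    -- `f` is an arboreal L-coloring of `G_0 = G − {v 1, …, v k}`
    (hfL : ∀ x, (∀ j : Fin k, x ≠ v j) → f x ∈ L x)
    (hf : ArbColOn G {x | ∀ j : Fin k, x ≠ v j} f) :
    -- it extends to an arboreal L-coloring of `G` in at least two distinct ways
    ∃ g₁ g₂ : V → α,
      ((∀ x, g₁ x ∈ L x) ∧ ArbColOn G Set.univ g₁ ∧
        ∀ x, (∀ j : Fin k, x ≠ v j) → g₁ x = f x) ∧
      ((∀ x, g₂ x ∈ L x) ∧ ArbColOn G Set.univ g₂ ∧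
        ∀ x, (∀ j : Fin k, x ≠ v j) → g₂ x = f x) ∧
      g₁ ≠ g₂ :=
  exists_two_isArbExtension v hv (fun i => (hdeg i).trans_lt (by rw [hL]; norm_num))
    (hdeg3.imp fun i hi => (Nat.add_le_add_right hi 2).trans_lt (by rw [hL]; norm_num))
    f ⟨hfL, hf⟩
end

section
/- Let G be a finite simple graph on n vertices such that every nonempty induced subgraph of G contains a vertex whose degree in that subgraph is at most 3, and let L be a list-assignment for G with |L(v)| = 3 for every vertex v. Then G has at least 2^n arboreal L-colorings. -/
namespace SimpleGraph

variable {V : Type*} {G : SimpleGraph V}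

theorem isAcyclic_induce_iff_s11 {s : Set V} :
    (G.induce s).IsAcyclic ↔ ∀ ⦃v⦄ (p : G.Walk v v), p.IsCycle → ¬ ∀ u ∈ p.support, u ∈ s := by
  have hinj : Function.Injective (Embedding.induce s (G := G)).toHom := Subtype.val_injective
  constructor
  · intro h v p hp hs
    refine h (p.induce s hs) ?_
    rwa [← Walk.isCycle_map_iff_of_injective hinj, Walk.map_induce]
  · intro h v p hp
    refine h _ ((Walk.isCycle_map_iff_of_injective hinj).2 hp) ?_
    simp only [Walk.support_map, List.mem_map]
    rintro _ ⟨w, -, rfl⟩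
    exact w.2

theorem isAcyclic_induce_insert {s : Set V} {x : V} (hs : (G.induce s).IsAcyclic)
    (hx : {y ∈ s | G.Adj x y}.Subsingleton) : (G.induce (insert x s)).IsAcyclic := by
  classical
  rw [isAcyclic_induce_iff_s11] at hs ⊢
  intro v p hp hsupp
  by_cases hxp : x ∈ p.support
  · -- the two neighbours of `x` on a cycle through `x` are distinct
    set q := p.rotate x hxp
    have hq : q.IsCycle := hp.rotate hxp
    have hq_mem : ∀ u ∈ q.support, G.Adj x u → u ∈ {y ∈ s | G.Adj x y} := fun u hu hxu =>
      ⟨(hsupp u ((p.mem_support_rotate_iff x hxp).1 hu)).resolve_left hxu.ne', hxu⟩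
    have hnil : ¬ q.Nil := hq.not_nil
    exact hq.snd_ne_penultimate <| hx (hq_mem _ (q.getVert_mem_support 1) (q.adj_snd hnil))
      (hq_mem _ (q.getVert_mem_support _) (q.adj_penultimate hnil).symm)
  · exact hs p hp fun u hu => (hsupp u hu).resolve_left fun hux => hxp (hux ▸ hu)

end SimpleGraph

open Finset SimpleGraph

section

open scoped Classical

variable {V α : Type*} {G : SimpleGraph V} {s t : Set V} {f : V → α}

theorem arbColOn_empty : ArbColOn G ∅ f := fun _ =>
  isAcyclic_induce_iff_s11.2 fun v _ _ hs => (hs v (Walk.start_mem_support _)).1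

theorem ArbColOn.insert_update (hf : ArbColOn G s f) {x : V} {c : α}
    (hc : {y ∈ {v | v ∈ s ∧ f v = c} | G.Adj x y}.Subsingleton) :
    ArbColOn G (insert x s) (Function.update f x c) := by
  intro c'
  by_cases hcc' : c' = c
  · subst hcc'
    refine (isAcyclic_induce_insert (hf c') hc).embedding (G.induceHomOfLE ?_)
    rintro v ⟨rfl | hv, hvc⟩
    · exact Set.mem_insert _ _
    · by_cases hvx : v = x
      · exact hvx ▸ Set.mem_insert _ _
      · exact Or.inr ⟨hv, by rwa [Function.update_of_ne hvx] at hvc⟩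
  · refine (hf c').embedding (G.induceHomOfLE ?_)
    rintro v ⟨hv, hvc⟩
    have hvx : v ≠ x := by
      rintro rfl
      exact hcc' (by simpa using hvc.symm)
    exact ⟨hv.resolve_left hvx, by rwa [Function.update_of_ne hvx] at hvc⟩

/-- A colour `c` can only fail to extend `f` to `x` if `x` has two neighbours coloured `c`,
and these pairs are disjoint for distinct colours. -/
theorem ArbColOn.two_mul_card_bad_le {t : Finset V} (hf : ArbColOn G t f) (x : V)
    (C : Finset α) :
    2 * #{c ∈ C | ¬ ArbColOn G (insert x t) (Function.update f x c)} ≤ #{y ∈ t | G.Adj x y} := by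
  set N := {y ∈ t | G.Adj x y}
  have hbad : ∀ c ∈ {c ∈ C | ¬ ArbColOn G (insert x t) (Function.update f x c)},
      2 ≤ #{y ∈ N | f y = c} := by
    intro c hc
    by_contra! hlt
    refine (mem_filter.1 hc).2 (hf.insert_update ?_)
    intro y hy z hz
    have hcard := card_le_one.1 (Nat.le_of_lt_succ hlt)
    exact hcard y (mem_filter.2 ⟨mem_filter.2 ⟨hy.1.1, hy.2⟩, hy.1.2⟩)
      z (mem_filter.2 ⟨mem_filter.2 ⟨hz.1.1, hz.2⟩, hz.1.2⟩)
  calc 2 * #{c ∈ C | ¬ ArbColOn G (insert x t) (Function.update f x c)}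
      ≤ ∑ c ∈ C with ¬ ArbColOn G (insert x t) (Function.update f x c), #{y ∈ N | f y = c} := by
        rw [mul_comm, ← smul_eq_mul, ← sum_const]
        exact sum_le_sum hbad
    _ = #{y ∈ N | f y ∈ {c ∈ C | ¬ ArbColOn G (insert x t) (Function.update f x c)}} :=
        sum_card_fiberwise_eq_card_filter _ _ _
    _ ≤ #N := card_filter_le _ _

variable [Fintype V] {L : V → Finset α} {k : ℕ}

variable (G L) in
noncomputable def arborealColorings (s : Set V) : Finset (V → α) :=
  {f ∈ Fintype.piFinset L | ArbColOn G s f}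

theorem mem_arborealColorings :
    f ∈ arborealColorings G L s ↔ (∀ v, f v ∈ L v) ∧ ArbColOn G s f := by
  simp [arborealColorings]

theorem card_arborealColorings_empty (hL : ∀ v, #(L v) = k) :
    #(arborealColorings G L ∅) = k ^ Fintype.card V := by
  rw [arborealColorings, filter_true_of_mem fun _ _ => arbColOn_empty, Fintype.card_piFinset,
    prod_congr rfl fun v _ => hL v, prod_const, card_univ]

/-- Double counting of the pairs `(f, c)` with `f` arboreal on `t` and `c` a colour extending it
to `x`: the pair is recovered from the extension `update f x c` together with `f x ∈ L x`. -/
theorem mul_card_arborealColorings_le_mul_card_insert {x : V} {m : ℕ} (hL : #(L x) = k)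
    (hm : ∀ f ∈ arborealColorings G L t,
      m ≤ #{c ∈ L x | ArbColOn G (insert x t) (Function.update f x c)}) :
    m * #(arborealColorings G L t) ≤ k * #(arborealColorings G L (insert x t)) := by
  set P := (arborealColorings G L t).sigma
    fun f => {c ∈ L x | ArbColOn G (insert x t) (Function.update f x c)}
  have hP_maps : ∀ p ∈ P, (Function.update p.1 x p.2, p.1 x) ∈
      arborealColorings G L (insert x t) ×ˢ L x := by
    rintro ⟨f, c⟩ hp
    obtain ⟨hf, hc⟩ := mem_sigma.1 hp
    obtain ⟨hcL, hext⟩ := mem_filter.1 hc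
    refine mem_product.2 ⟨mem_arborealColorings.2 ⟨fun v => ?_, hext⟩,
      (mem_arborealColorings.1 hf).1 x⟩
    rcases eq_or_ne v x with rfl | hvx
    · simpa using hcL
    · simpa [Function.update_of_ne hvx] using (mem_arborealColorings.1 hf).1 v
  have hP_inj : Set.InjOn (fun p : (_ : V → α) × α => (Function.update p.1 x p.2, p.1 x)) P := by
    rintro ⟨f, c⟩ - ⟨f', c'⟩ - h
    obtain ⟨hupd, hfx⟩ : Function.update f x c = Function.update f' x c' ∧ f x = f' x :=
      Prod.mk.inj h
    have hcc' : c = c' := by simpa using congrFun hupd x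
    have hff' : f = f' := by
      have := congrArg (Function.update · x (f x)) hupd
      simp only [Function.update_idem, Function.update_eq_self] at this
      rwa [hfx, Function.update_eq_self] at this
    subst hcc' hff'
    rfl
  calc m * #(arborealColorings G L t)
      ≤ ∑ f ∈ arborealColorings G L t,
          #{c ∈ L x | ArbColOn G (insert x t) (Function.update f x c)} := by
        rw [mul_comm, ← smul_eq_mul, ← sum_const]
        exact sum_le_sum hm
    _ = #P := card_sigma _ _ |>.symm
    _ ≤ #(arborealColorings G L (insert x t) ×ˢ L x) := card_le_card_of_injOn _ hP_maps hP_inj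
    _ = k * #(arborealColorings G L (insert x t)) := by rw [card_product, hL, mul_comm]

theorem sub_div_two_le_card_extensions {t : Finset V} (hf : f ∈ arborealColorings G L t)
    {x : V} {d : ℕ} (hL : #(L x) = k) (hx : #{y ∈ t | G.Adj x y} ≤ d) :
    k - d / 2 ≤ #{c ∈ L x | ArbColOn G (insert x t) (Function.update f x c)} := by
  have hbad := (mem_arborealColorings.1 hf).2.two_mul_card_bad_le x (L x)
  have hsplit := card_filter_add_card_filter_not
    (s := L x) (fun c => ArbColOn G (insert x ↑t) (Function.update f x c))
  omega

theorem pow_mul_pow_le_pow_mul_card_arborealColorings {d : ℕ}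
    (hdegen : ∀ s : Set V, s.Nonempty → ∃ x ∈ s, {y | y ∈ s ∧ G.Adj x y}.ncard ≤ d)
    (hL : ∀ v, #(L v) = k) (s : Finset V) :
    (k - d / 2) ^ #s * k ^ Fintype.card V ≤ k ^ #s * #(arborealColorings G L s) := by
  induction s using Finset.strongInduction with
  | H s ih =>
    rcases s.eq_empty_or_nonempty with rfl | hs
    · simp [card_arborealColorings_empty hL]
    obtain ⟨x, hxs, hx⟩ := hdegen s (coe_nonempty.2 hs)
    rw [show {y | y ∈ (s : Set V) ∧ G.Adj x y} = ↑{y ∈ s | G.Adj x y} by simp,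
      Set.ncard_coe_finset] at hx
    set t := s.erase x
    have hx_t : #{y ∈ t | G.Adj x y} ≤ d :=
      (card_le_card (filter_subset_filter _ (erase_subset x s))).trans hx
    have hstep := mul_card_arborealColorings_le_mul_card_insert (hL x)
      fun f hf => sub_div_two_le_card_extensions hf (hL x) hx_t
    rw [← coe_insert, insert_erase hxs] at hstep
    rw [← card_erase_add_one hxs, pow_succ, pow_succ]
    calc (k - d / 2) ^ #t * (k - d / 2) * k ^ Fintype.card V
        = (k - d / 2) * ((k - d / 2) ^ #t * k ^ Fintype.card V) := by ring
      _ ≤ (k - d / 2) * (k ^ #t * #(arborealColorings G L t)) :=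
        Nat.mul_le_mul_left _ (ih t (erase_ssubset hxs))
      _ = k ^ #t * ((k - d / 2) * #(arborealColorings G L t)) := by ring
      _ ≤ k ^ #t * (k * #(arborealColorings G L s)) := Nat.mul_le_mul_left _ hstep
      _ = k ^ #t * k * #(arborealColorings G L s) := by ring

end

theorem stmt_11 {V α : Type*} [Fintype V] (G : SimpleGraph V)
    -- every nonempty induced subgraph has a vertex of degree at most 3 in it
    (hdegen : ∀ s : Set V, s.Nonempty → ∃ x ∈ s, {y | y ∈ s ∧ G.Adj x y}.ncard ≤ 3)
    (L : V → Finset α) (hL : ∀ x, (L x).card = 3) :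
    2 ^ Fintype.card V ≤
      {f : V → α | (∀ x, f x ∈ L x) ∧ ArbColOn G Set.univ f}.ncard := by
  classical
  have hcount := pow_mul_pow_le_pow_mul_card_arborealColorings hdegen hL univ
  rw [card_univ, coe_univ] at hcount
  have hcard : {f : V → α | (∀ x, f x ∈ L x) ∧ ArbColOn G Set.univ f}.ncard =
      #(arborealColorings G L Set.univ) := by
    rw [← Set.ncard_coe_finset]
    congr 1
    ext f
    exact mem_arborealColorings.symm
  rw [hcard]
  exact Nat.le_of_mul_le_mul_left (c := 3 ^ Fintype.card V) (by simpa [mul_comm] using hcount)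
    (by positivity)
end
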